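/- arXiv:1609.04654 — 2 statements merged into one kernel-verified Lean document; each statement's English description precedes it below -/
import Mathlib

section
/- Let G be a finite group and H ≤ G. If Y is a G-set all of whose orbits are isomorphic to G/H, then the fixed point set Y^H is nonempty on each orbit, and the natural map G/H ×_{WH} Y^H → Y sending [gH, y] to g·y is a G-equivariant bijection. Here WH = N_G(H)/H acts on Y^H by restriction of the G-action and G/H ×_{WH} Y^H is the quotient of G/H × Y^H by the relation (gnH, y) ∼ (gH, n·y) for n ∈ N_G(H). -/
/-!
An `H`-fixed point `y` of an orbit isomorphic to `G/H` has `H ≤ G_y` with `[G : G_y] = [G : H]`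
finite, so `G_y = H`. Hence if `g • y = g' • y'` for fixed points `y, y'`, then
`n = g'⁻¹ g` carries `y` to `y'` and conjugates `G_y = H` onto `G_{y'} = H`, i.e. `n ∈ N_G(H)`,
which is exactly the identification made in `G/H ×_{WH} Y^H`. Every orbit meets `Y^H` at the
image of the coset `H` under an equivariant map `G/H → Y`.
-/

/-- The equivalence relation on `G × X^H` defining the twisted product
`G/H ×_{WH} X^H`: `(gn, x) ∼ (g, n•x)` for `n ∈ N_G(H)` (this in particular quotients
the first factor by `H`, since `H ⊆ N_G(H)` acts trivially on `X^H`). -/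
def twistedSetoid (G : Type*) [Group G] (H : Subgroup G) (X : Type*) [MulAction G X] :
    Setoid (G × {x : X // ∀ h ∈ H, h • x = x}) where
  r p q := ∃ n ∈ (Subgroup.normalizer (H : Set G)), p.1 = q.1 * n ∧ (q.2 : X) = n • (p.2 : X)
  iseqv := by
    constructor
    · intro p; exact ⟨1, (Subgroup.normalizer (H : Set G)).one_mem, by simp, by simp⟩
    · rintro p q ⟨n, hn, h1, h2⟩
      exact ⟨n⁻¹, (Subgroup.normalizer (H : Set G)).inv_mem hn, by rw [h1]; group, by rw [h2]; simp⟩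
    · rintro p q s ⟨n, hn, h1, h2⟩ ⟨m, hm, h3, h4⟩
      exact ⟨m * n, (Subgroup.normalizer (H : Set G)).mul_mem hm hn, by rw [h1, h3]; group,
        by rw [h4, h2, mul_smul]⟩

open MulAction

namespace Subgroup

variable {G : Type*} [Group G]

theorem eq_of_le_of_index_eq {H K : Subgroup G} (hle : H ≤ K) (hindex : K.index = H.index)
    (h0 : H.index ≠ 0) : H = K := by
  have hrel : H.relIndex K * K.index = H.index := relIndex_mul_index hle
  rw [hindex, mul_eq_right₀ h0, relIndex_eq_one] at hrel
  exact le_antisymm hle hrel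

end Subgroup

section Stabilizer

variable {G X : Type*} [Group G] [MulAction G X] {H : Subgroup G}

theorem smul_apply_mk_one_of_mem {f : G ⧸ H → X} (hf : ∀ (g : G) (q : G ⧸ H), f (g • q) = g • f q)
    {h : G} (hh : h ∈ H) : h • f (1 : G) = f (1 : G) := by
  rw [← hf, MulAction.Quotient.smul_coe, smul_eq_mul, mul_one, ← one_mul h,
    QuotientGroup.mk_mul_of_mem 1 hh]

theorem stabilizer_eq_of_le_of_card_orbit [H.FiniteIndex] {x : X} (hle : H ≤ stabilizer G x)
    (hcard : Nat.card (orbit G x) = Nat.card (G ⧸ H)) : stabilizer G x = H := by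
  refine (Subgroup.eq_of_le_of_index_eq hle ?_ Subgroup.FiniteIndex.index_ne_zero).symm
  rw [index_stabilizer, ← Nat.card_coe_set_eq, hcard, Subgroup.index]

theorem mem_normalizer_of_stabilizer_eq {x : X} {n : G} (hx : stabilizer G x = H)
    (hnx : stabilizer G (n • x) = H) : n ∈ Subgroup.normalizer (H : Set G) := by
  rw [Subgroup.mem_normalizer_iff_map_conj_eq, ← hx]
  exact (stabilizer_smul_eq_stabilizer_map_conj n x).symm.trans (hnx.trans hx.symm)

end Stabilizer

section TwistedProduct

variable (G : Type*) [Group G] (H : Subgroup G) (X : Type*) [MulAction G X]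

def twistedProductMap : Quotient (twistedSetoid G H X) → X :=
  Quotient.lift (fun p ↦ p.1 • (p.2 : X)) (by rintro p q ⟨n, -, h1, h2⟩; rw [h1, h2, mul_smul])

variable {G H X}

@[simp]
theorem twistedProductMap_mk (g : G) (x : {x : X // ∀ h ∈ H, h • x = x}) :
    twistedProductMap G H X (Quotient.mk _ (g, x)) = g • (x : X) :=
  rfl

theorem twistedProductMap_mk_mul (g' g : G) (x : {x : X // ∀ h ∈ H, h • x = x}) :
    twistedProductMap G H X (Quotient.mk _ (g' * g, x))
      = g' • twistedProductMap G H X (Quotient.mk _ (g, x)) :=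
  mul_smul g' g (x : X)

theorem twistedProductMap_surjective (hfix : ∀ y : X, ∃ z ∈ orbit G y, ∀ h ∈ H, h • z = z) :
    Function.Surjective (twistedProductMap G H X) := by
  intro y
  obtain ⟨z, ⟨g, rfl⟩, hz⟩ := hfix y
  exact ⟨Quotient.mk _ (g⁻¹, ⟨g • y, hz⟩), inv_smul_smul g y⟩

theorem twistedProductMap_injective
    (hstab : ∀ x : X, (∀ h ∈ H, h • x = x) → stabilizer G x = H) :
    Function.Injective (twistedProductMap G H X) := by
  refine Quotient.ind fun ⟨g, x⟩ ↦ Quotient.ind fun ⟨g', x'⟩ hxx' ↦ ?_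
  replace hxx' : g • (x : X) = g' • (x' : X) := hxx'
  have hx' : (x' : X) = (g'⁻¹ * g) • (x : X) := by rw [mul_smul, hxx', inv_smul_smul]
  have hn : g'⁻¹ * g ∈ Subgroup.normalizer (H : Set G) :=
    mem_normalizer_of_stabilizer_eq (hstab x x.2) (hx' ▸ hstab x' x'.2)
  exact Quotient.sound ⟨g'⁻¹ * g, hn, by group, hx'⟩

end TwistedProduct

/-- If every orbit of the `G`-set `Y` is `G`-equivariantly isomorphic to `G/H`,
then every orbit meets the fixed point set `Y^H`, and the natural map
`G/H ×_{WH} Y^H → Y`, `[gH, y] ↦ g • y`, is a `G`-equivariant bijection. -/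
theorem tom_dieck_orbit_decomposition
    (G : Type*) [Group G] [Fintype G] (H : Subgroup G) (Y : Type*) [MulAction G Y]
    (horb : ∀ y : Y, ∃ f : G ⧸ H → MulAction.orbit G y,
      Function.Bijective f ∧
      ∀ (g : G) (q : G ⧸ H), (f (g • q) : Y) = g • (f q : Y)) :
    (∀ y : Y, ∃ z ∈ MulAction.orbit G y, ∀ h ∈ H, h • z = z) ∧
    ∃ lam : Quotient (twistedSetoid G H Y) → Y,
      (∀ (g : G) (y : {y : Y // ∀ h ∈ H, h • y = y}),
        lam (Quotient.mk (twistedSetoid G H Y) (g, y)) = g • (y : Y)) ∧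
      Function.Bijective lam ∧
      (∀ (g' g : G) (y : {y : Y // ∀ h ∈ H, h • y = y}),
        lam (Quotient.mk (twistedSetoid G H Y) (g' * g, y))
          = g' • lam (Quotient.mk (twistedSetoid G H Y) (g, y))) := by
  have hfix : ∀ y : Y, ∃ z ∈ orbit G y, ∀ h ∈ H, h • z = z := fun y ↦ by
    obtain ⟨f, -, hf⟩ := horb y
    exact ⟨f (1 : G), (f _).2, fun h hh ↦ smul_apply_mk_one_of_mem (f := fun q ↦ (f q : Y)) hf hh⟩
  have hstab : ∀ y : Y, (∀ h ∈ H, h • y = y) → stabilizer G y = H := fun y hy ↦ by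
    obtain ⟨f, hf, -⟩ := horb y
    exact stabilizer_eq_of_le_of_card_orbit hy (Nat.card_eq_of_bijective f hf).symm
  exact ⟨hfix, twistedProductMap G H Y, twistedProductMap_mk,
    ⟨twistedProductMap_injective hstab, twistedProductMap_surjective hfix⟩,
    twistedProductMap_mk_mul⟩
end

section
/- Let G be a finite group, H ≤ G, and X a G-set all of whose points have stabilizer conjugate to H. Then the WH-action on X^H is free, where WH = N_G(H)/H. -/
theorem Subgroup.eq_map_of_le_map_of_injective {G : Type*} [Group G] {H : Subgroup G} [Finite H]
    {f : G →* G} (hf : Function.Injective f) (hle : H ≤ H.map f) : H = H.map f :=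
  have : Finite (H.map f) := Nat.finite_of_card_ne_zero <| by
    rw [card_map_of_injective hf]; exact Nat.card_pos.ne'
  eq_of_le_of_card_ge hle (card_map_of_injective hf).le

/-- If every point of the `G`-set `X` has stabilizer conjugate to `H`, then the
action of `WH = N_G(H)/H` on the `H`-fixed points `X^H` (given by the action of the
normalizer) is free: if `n ∈ N_G(H)` fixes a point of `X^H` then `n ∈ H`. -/
theorem weyl_action_on_fixed_points_free
    (G : Type*) [Group G] [Fintype G] (H : Subgroup G) (X : Type*) [MulAction G X]
    (hconj : ∀ x : X, ∃ g : G,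
      MulAction.stabilizer G x = Subgroup.map (MulAut.conj g).toMonoidHom H) :
    ∀ n : G, n ∈ Subgroup.normalizer (H : Set G) → ∀ x : X, (∀ h ∈ H, h • x = x) → n • x = x → n ∈ H := by
  intro n _ x hfix hnx
  obtain ⟨g, hg⟩ := hconj x
  have hle : H ≤ MulAction.stabilizer G x := hfix
  have hstab : MulAction.stabilizer G x = H :=
    hg.trans (Subgroup.eq_map_of_le_map_of_injective (MulAut.conj g).injective (hg ▸ hle)).symm
  exact hstab ▸ hnx
end
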